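/- arXiv:2211.11125 — 4 statements merged into one kernel-verified Lean document; each statement's English description precedes it below -/
import Mathlib

section
/- Let ε₁ > 0, ε₂ > 0, λ > 0 be real numbers and let n_up, n_down be positive integers. If r₂ is a solution of the downstream pore-radius ODE (as defined in the context), then r₂(t) > 0 for every t ∈ [0, ε₁]. -/
open Real Set

set_option maxHeartbeats 1000000

/-- Theorem 1 of the paper: a solution of the downstream pore-radius ODE stays
strictly positive on the whole time interval `[0, ε₁]`. -/
theorem downstream_pore_radius_pos
    (ε₁ ε₂ lam : ℝ) (hε₁ : 0 < ε₁) (hε₂ : 0 < ε₂) (hlam : 0 < lam)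
    (n_up n_down : ℕ) (hnup : 0 < n_up) (hndown : 0 < n_down)
    (r₂ : ℝ → ℝ)
    (hcont : ContinuousOn r₂ (Icc 0 ε₁))
    (hinit : r₂ 0 = ε₂)
    (hodePos : ∀ t ∈ Ico 0 ε₁, 0 < r₂ t →
      HasDerivAt r₂
        (-Real.exp (-(lam * ((n_up : ℝ) * (ε₁ - t) / ((n_down : ℝ) * (r₂ t) ^ 4)
          + 1 / (ε₁ - t) ^ 3)))) t)
    (hodeNonpos : ∀ t ∈ Ico 0 ε₁, r₂ t ≤ 0 → HasDerivAt r₂ 0 t) :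
    ∀ t ∈ Icc 0 ε₁, 0 < r₂ t := by
  by_contra hcon
  push_neg at hcon
  obtain ⟨s, hsmem, hrs⟩ := hcon
  -- the set of times where r₂ is nonpositive
  set c : ℝ := (n_up : ℝ) / (n_down : ℝ) with hc
  have hnup' : (0:ℝ) < (n_up : ℝ) := by exact_mod_cast hnup
  have hndown' : (0:ℝ) < (n_down : ℝ) := by exact_mod_cast hndown
  have hc0 : 0 < c := div_pos hnup' hndown'
  set Z : Set ℝ := Icc 0 ε₁ ∩ r₂ ⁻¹' (Iic 0) with hZ
  have hZne : Z.Nonempty := ⟨s, hsmem, hrs⟩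
  have hZclosed : IsClosed Z :=
    hcont.preimage_isClosed_of_isClosed isClosed_Icc isClosed_Iic
  have hZbdd : BddBelow Z := ⟨0, fun t ht => ht.1.1⟩
  set t₀ : ℝ := sInf Z with ht₀
  have ht₀Z : t₀ ∈ Z := hZclosed.csInf_mem hZne hZbdd
  have ht₀mem : t₀ ∈ Icc 0 ε₁ := ht₀Z.1
  have ht₀le : r₂ t₀ ≤ 0 := ht₀Z.2
  have hpos : ∀ t, 0 ≤ t → t < t₀ → 0 < r₂ t := by
    intro t h1 h2
    by_contra h
    push_neg at h
    have : t ∈ Z := ⟨⟨h1, h2.le.trans ht₀mem.2⟩, h⟩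
    exact absurd (csInf_le hZbdd this) (not_le.2 h2)
  have ht₀pos : 0 < t₀ := by
    rcases lt_or_eq_of_le ht₀mem.1 with h | h
    · exact h
    · exfalso
      rw [← h] at ht₀le
      rw [hinit] at ht₀le
      linarith
  -- choose the level b
  set x : ℝ := min 1 (lam * c) with hx
  have hx0 : 0 < x := lt_min one_pos (mul_pos hlam hc0)
  set b : ℝ := min ε₂ x / 2 with hb
  have hb0 : 0 < b := by
    have := lt_min hε₂ hx0
    simpa [hb] using half_pos this
  have hbε₂ : b ≤ ε₂ := by
    have h1 : min ε₂ x ≤ ε₂ := min_le_left _ _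
    have := lt_min hε₂ hx0
    rw [hb]; linarith
  have hb3 : b ^ 3 < lam * c := by
    have h1 : b ≤ x / 2 := by
      rw [hb]
      have : min ε₂ x ≤ x := min_le_right _ _
      linarith
    have hx1 : x ≤ 1 := min_le_left _ _
    have hx2 : x ≤ lam * c := min_le_right _ _
    have h2 : b ^ 3 ≤ (x / 2) ^ 3 := pow_le_pow_left₀ hb0.le h1 3
    have h3 : x ^ 3 ≤ x := by nlinarith [hx0, hx1, mul_pos hx0 hx0]
    have h4 : (x / 2) ^ 3 = x ^ 3 / 8 := by ring
    linarith
  -- last time where r₂ equals b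
  set S : Set ℝ := Icc 0 t₀ ∩ r₂ ⁻¹' {b} with hS
  have hIccsub : Icc 0 t₀ ⊆ Icc 0 ε₁ := Icc_subset_Icc le_rfl ht₀mem.2
  have hSne : S.Nonempty := by
    have hivt := intermediate_value_Icc' ht₀pos.le (hcont.mono hIccsub)
    have hbmem : b ∈ Icc (r₂ t₀) (r₂ 0) := by
      constructor
      · linarith
      · rw [hinit]; exact hbε₂
    obtain ⟨u, hu, hub⟩ := hivt hbmem
    exact ⟨u, hu, hub⟩
  have hSclosed : IsClosed S :=
    (hcont.mono hIccsub).preimage_isClosed_of_isClosed isClosed_Icc isClosed_singleton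
  have hSbdd : BddAbove S := ⟨t₀, fun t ht => ht.1.2⟩
  set t₁ : ℝ := sSup S with ht₁
  have ht₁S : t₁ ∈ S := hSclosed.csSup_mem hSne hSbdd
  have ht₁b : r₂ t₁ = b := ht₁S.2
  have ht₁0 : 0 ≤ t₁ := ht₁S.1.1
  have ht₁lt : t₁ < t₀ := by
    rcases lt_or_eq_of_le ht₁S.1.2 with h | h
    · exact h
    · exfalso; rw [h] at ht₁b; rw [ht₁b] at ht₀le; linarith
  -- r₂ < b on (t₁, t₀]
  have hltb : ∀ t, t₁ < t → t ≤ t₀ → r₂ t < b := by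
    intro t h1 h2
    by_contra h
    push_neg at h
    have hivt := intermediate_value_Icc' h2 ((hcont.mono hIccsub).mono
      (Icc_subset_Icc (ht₁0.trans h1.le) le_rfl))
    have hbmem : b ∈ Icc (r₂ t₀) (r₂ t) := ⟨by linarith, h⟩
    obtain ⟨u, hu, hub⟩ := hivt hbmem
    have huS : u ∈ S := ⟨⟨(ht₁0.trans h1.le).trans hu.1, hu.2⟩, hub⟩
    have := le_csSup hSbdd huS
    have : t ≤ t₁ := le_trans hu.1 this
    linarith
  -- the comparison function
  set K : ℝ := lam * c / b ^ 4 with hK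
  have hK0 : 0 < K := div_pos (mul_pos hlam hc0) (by positivity)
  set h : ℝ → ℝ := fun t => r₂ t + (1 / K) * Real.exp (-(K * (ε₁ - t))) with hh
  -- h has nonnegative derivative on Ioo t₁ t₀
  have hderiv : ∀ t ∈ Ioo t₁ t₀,
      HasDerivAt h
        (-Real.exp (-(lam * ((n_up : ℝ) * (ε₁ - t) / ((n_down : ℝ) * (r₂ t) ^ 4)
          + 1 / (ε₁ - t) ^ 3))) + Real.exp (-(K * (ε₁ - t)))) t := by
    intro t ht
    have htIco : t ∈ Ico 0 ε₁ := ⟨ht₁0.trans ht.1.le, lt_of_lt_of_le ht.2 ht₀mem.2⟩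
    have hrpos : 0 < r₂ t := hpos t htIco.1 ht.2
    have hd := hodePos t htIco hrpos
    have h1 : HasDerivAt (fun u : ℝ => K * u - K * ε₁) K t := by
      simpa using ((hasDerivAt_id t).const_mul K).sub_const (K * ε₁)
    have h2 := h1.exp
    have h3 := h2.const_mul (1 / K)
    have h4 : HasDerivAt (fun u : ℝ => (1 / K) * Real.exp (-(K * (ε₁ - u))))
        (Real.exp (-(K * (ε₁ - t)))) t := by
      have he : ∀ u : ℝ, -(K * (ε₁ - u)) = K * u - K * ε₁ := fun u => by ring
      have hval : (1 / K) * (Real.exp (K * t - K * ε₁) * K) = Real.exp (-(K * (ε₁ - t))) := by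
        rw [he]
        field_simp
      rw [← hval]
      simpa [he] using h3
    exact hd.add h4
  have hdnonneg : ∀ t ∈ Ioo t₁ t₀,
      0 ≤ -Real.exp (-(lam * ((n_up : ℝ) * (ε₁ - t) / ((n_down : ℝ) * (r₂ t) ^ 4)
          + 1 / (ε₁ - t) ^ 3))) + Real.exp (-(K * (ε₁ - t))) := by
    intro t ht
    have hrpos : 0 < r₂ t := hpos t (ht₁0.trans ht.1.le) ht.2
    have hrle : r₂ t ≤ b := (hltb t ht.1 ht.2.le).le
    have htε : t < ε₁ := lt_of_lt_of_le ht.2 ht₀mem.2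
    have hεt : 0 < ε₁ - t := by linarith
    have hA : K * (ε₁ - t) ≤ lam * ((n_up : ℝ) * (ε₁ - t) / ((n_down : ℝ) * (r₂ t) ^ 4)) := by
      have hr4 : (r₂ t) ^ 4 ≤ b ^ 4 := pow_le_pow_left₀ hrpos.le hrle 4
      have hr4' : (0:ℝ) < (r₂ t) ^ 4 := by positivity
      have hb4 : (0:ℝ) < b ^ 4 := by positivity
      have hdiv : (n_up : ℝ) * (ε₁ - t) / ((n_down : ℝ) * b ^ 4)
          ≤ (n_up : ℝ) * (ε₁ - t) / ((n_down : ℝ) * (r₂ t) ^ 4) := by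
        apply div_le_div_of_nonneg_left (by positivity) (by positivity)
        exact mul_le_mul_of_nonneg_left hr4 hndown'.le
      have heq : K * (ε₁ - t) = lam * ((n_up : ℝ) * (ε₁ - t) / ((n_down : ℝ) * b ^ 4)) := by
        rw [hK, hc]
        field_simp
      rw [heq]
      exact mul_le_mul_of_nonneg_left hdiv hlam.le
    have hB : 0 ≤ lam * (1 / (ε₁ - t) ^ 3) := by positivity
    have hexp : Real.exp (-(lam * ((n_up : ℝ) * (ε₁ - t) / ((n_down : ℝ) * (r₂ t) ^ 4)
        + 1 / (ε₁ - t) ^ 3))) ≤ Real.exp (-(K * (ε₁ - t))) := by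
      apply Real.exp_le_exp.2
      have : K * (ε₁ - t) ≤ lam * ((n_up : ℝ) * (ε₁ - t) / ((n_down : ℝ) * (r₂ t) ^ 4)
          + 1 / (ε₁ - t) ^ 3) := by
        rw [mul_add]
        linarith
      linarith
    linarith
  -- h is monotone on [t₁, t₀]
  have hmono : MonotoneOn h (Icc t₁ t₀) := by
    apply monotoneOn_of_deriv_nonneg (convex_Icc t₁ t₀)
    · apply ContinuousOn.add
      · exact hcont.mono (fun u hu => ⟨ht₁0.trans hu.1, hu.2.trans ht₀mem.2⟩)
      · have : Continuous fun u : ℝ => (1 / K) * Real.exp (-(K * (ε₁ - u))) := by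
          fun_prop
        exact this.continuousOn
    · intro t ht
      rw [interior_Icc] at ht
      exact ((hderiv t ht).differentiableAt).differentiableWithinAt
    · intro t ht
      rw [interior_Icc] at ht
      rw [(hderiv t ht).deriv]
      exact hdnonneg t ht
  have hle := hmono (left_mem_Icc.2 ht₁lt.le) (right_mem_Icc.2 ht₁lt.le) ht₁lt.le
  -- derive the contradiction
  have he0 : Real.exp (-(K * (ε₁ - t₀))) ≤ 1 := by
    apply Real.exp_le_one_iff.2
    have : 0 ≤ ε₁ - t₀ := by linarith [ht₀mem.2]
    nlinarith
  have he1 : 0 < Real.exp (-(K * (ε₁ - t₁))) := Real.exp_pos _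
  have hfinal : b < 1 / K := by
    have h1 : h t₁ = b + (1 / K) * Real.exp (-(K * (ε₁ - t₁))) := by rw [hh]; simp [ht₁b]
    have h2 : h t₀ = r₂ t₀ + (1 / K) * Real.exp (-(K * (ε₁ - t₀))) := rfl
    rw [h1, h2] at hle
    have hKinv : 0 < 1 / K := by positivity
    nlinarith
  have : 1 / K = b ^ 4 / (lam * c) := by
    rw [hK]
    field_simp
  rw [this] at hfinal
  have hlc : 0 < lam * c := mul_pos hlam hc0
  rw [lt_div_iff₀ hlc] at hfinal
  nlinarith [hb0]
end

section
/- Let ε₁ > 0, ε₂ > 0, λ > 0 be real numbers and let n_up, n_down be positive integers, and set κ = λ·n_up/n_down. If r₂ is a solution of the downstream pore-radius ODE (as defined in the context), then for every t ∈ [0, ε₁) one has the explicit lower bound r₂(t) ≥ ε₂ · exp(−t · (4·κ·(ε₁ − t)·e)^(−1/4)). -/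
open Real Set Topology Filter

/-- For `x > 0`, `exp (-x) ≤ (4·x·e)^(-1/4)`. -/
lemma exp_neg_le_rpow_aux {x : ℝ} (hx : 0 < x) :
    Real.exp (-x) ≤ (4 * x * Real.exp 1) ^ (-(1 : ℝ) / 4) := by
  have he : (0:ℝ) < Real.exp 1 := Real.exp_pos 1
  have hb : (0:ℝ) < 4 * x * Real.exp 1 := by positivity
  have h1 : 4 * x * Real.exp 1 ≤ Real.exp (4 * x) := by
    have h := Real.add_one_le_exp (4 * x - 1)
    rw [Real.exp_sub] at h
    have h' : 4 * x ≤ Real.exp (4 * x) / Real.exp 1 := by linarith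
    rw [le_div_iff₀ he] at h'
    linarith
  have h4 : Real.exp (-x) ^ (4 : ℕ) ≤ (4 * x * Real.exp 1)⁻¹ := by
    have : Real.exp (-x) ^ (4 : ℕ) = Real.exp (-(4 * x)) := by
      rw [← Real.exp_nat_mul]; ring_nf
    rw [this, Real.exp_neg]
    exact inv_anti₀ hb h1
  have hcalc : Real.exp (-x) = (Real.exp (-x) ^ (4 : ℕ)) ^ ((1:ℝ)/4) := by
    rw [← Real.rpow_natCast (Real.exp (-x)) 4, ← Real.rpow_mul (Real.exp_pos _).le]
    norm_num
  rw [hcalc]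
  calc (Real.exp (-x) ^ (4 : ℕ)) ^ ((1:ℝ)/4)
      ≤ ((4 * x * Real.exp 1)⁻¹) ^ ((1:ℝ)/4) :=
        Real.rpow_le_rpow (by positivity) h4 (by norm_num)
    _ = (4 * x * Real.exp 1) ^ (-(1 : ℝ) / 4) := by
        rw [Real.inv_rpow hb.le, ← Real.rpow_neg hb.le]
        norm_num

/-- Quantitative lower bound for a solution of the downstream pore-radius ODE:
`r₂ t ≥ ε₂ · exp (−t · (4·κ·(ε₁ − t)·e)^(−1/4))` for `t ∈ [0, ε₁)`,
where `κ = λ·n_up/n_down`. -/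
theorem downstream_pore_radius_lower_bound
    (ε₁ ε₂ lam κ : ℝ) (hε₁ : 0 < ε₁) (hε₂ : 0 < ε₂) (hlam : 0 < lam)
    (n_up n_down : ℕ) (hnup : 0 < n_up) (hndown : 0 < n_down)
    (hκ : κ = lam * (n_up : ℝ) / (n_down : ℝ))
    (r₂ : ℝ → ℝ)
    (hcont : ContinuousOn r₂ (Icc 0 ε₁))
    (hinit : r₂ 0 = ε₂)
    (hodePos : ∀ t ∈ Ico 0 ε₁, 0 < r₂ t →
      HasDerivAt r₂
        (-Real.exp (-(lam * ((n_up : ℝ) * (ε₁ - t) / ((n_down : ℝ) * (r₂ t) ^ 4)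
          + 1 / (ε₁ - t) ^ 3)))) t)
    (hodeNonpos : ∀ t ∈ Ico 0 ε₁, r₂ t ≤ 0 → HasDerivAt r₂ 0 t) :
    ∀ t ∈ Ico 0 ε₁,
      ε₂ * Real.exp (-(t * (4 * κ * (ε₁ - t) * Real.exp 1) ^ (-(1 : ℝ) / 4))) ≤ r₂ t := by
  have hnup' : (0:ℝ) < (n_up : ℝ) := by exact_mod_cast hnup
  have hndown' : (0:ℝ) < (n_down : ℝ) := by exact_mod_cast hndown
  have hκpos : 0 < κ := by rw [hκ]; positivity
  intro t ht
  obtain ⟨ht0, ht1⟩ := ht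
  have hεt : 0 < ε₁ - t := by linarith
  set M : ℝ := (4 * κ * (ε₁ - t) * Real.exp 1) ^ (-(1 : ℝ) / 4) with hMdef
  have hM : 0 < M := Real.rpow_pos_of_pos (by positivity) _
  set g : ℝ → ℝ := fun s => r₂ s * Real.exp (M * s) with hgdef
  have hIccsub : Icc (0:ℝ) t ⊆ Icc 0 ε₁ := Icc_subset_Icc le_rfl ht1.le
  have hgcont : ContinuousOn g (Icc 0 t) :=
    (hcont.mono hIccsub).mul ((Real.continuous_exp.comp (continuous_const.mul continuous_id)).continuousOn)
  have hg0 : g 0 = ε₂ := by simp [hgdef, hinit]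
  -- key estimate: wherever `r₂ x > 0` and `x ∈ Ico 0 ε₁`, `x ≤ t`, the derivative of g is ≥ 0
  have hderiv : ∀ x, 0 ≤ x → x ≤ t → 0 < r₂ x →
      HasDerivAt g
        ((-Real.exp (-(lam * ((n_up : ℝ) * (ε₁ - x) / ((n_down : ℝ) * (r₂ x) ^ 4)
          + 1 / (ε₁ - x) ^ 3)))) * Real.exp (M * x)
          + r₂ x * (Real.exp (M * x) * M)) x := by
    intro x hx0 hxt hrpos
    have hx : x ∈ Ico 0 ε₁ := ⟨hx0, lt_of_le_of_lt hxt ht1⟩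
    have h1 := hodePos x hx hrpos
    have h2 : HasDerivAt (fun s : ℝ => Real.exp (M * s)) (Real.exp (M * x) * M) x := by
      simpa using ((hasDerivAt_id x).const_mul M).exp
    exact h1.mul h2
  have hderiv_nonneg : ∀ x, 0 ≤ x → x ≤ t → 0 < r₂ x →
      0 ≤ (-Real.exp (-(lam * ((n_up : ℝ) * (ε₁ - x) / ((n_down : ℝ) * (r₂ x) ^ 4)
          + 1 / (ε₁ - x) ^ 3)))) * Real.exp (M * x)
          + r₂ x * (Real.exp (M * x) * M) := by
    intro x hx0 hxt hr
    have hεx : 0 < ε₁ - x := by linarith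
    set r := r₂ x with hrdef
    set X : ℝ := κ * (ε₁ - x) / r ^ 4 with hXdef
    have hX : 0 < X := by positivity
    have harg : lam * ((n_up : ℝ) * (ε₁ - x) / ((n_down : ℝ) * r ^ 4) + 1 / (ε₁ - x) ^ 3)
        = X + lam * (1 / (ε₁ - x) ^ 3) := by
      rw [hXdef, hκ]; field_simp
    have hE1 : Real.exp (-(lam * ((n_up : ℝ) * (ε₁ - x) / ((n_down : ℝ) * r ^ 4)
        + 1 / (ε₁ - x) ^ 3))) ≤ Real.exp (-X) := by
      apply Real.exp_le_exp.mpr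
      rw [harg]
      have : 0 < lam * (1 / (ε₁ - x) ^ 3) := by positivity
      linarith
    have hE2 : Real.exp (-X) ≤ (4 * X * Real.exp 1) ^ (-(1 : ℝ) / 4) := exp_neg_le_rpow_aux hX
    have hE3 : (4 * X * Real.exp 1) ^ (-(1 : ℝ) / 4)
        = (4 * κ * (ε₁ - x) * Real.exp 1) ^ (-(1 : ℝ) / 4) * r := by
      have hx4 : 4 * X * Real.exp 1 = (4 * κ * (ε₁ - x) * Real.exp 1) / r ^ 4 := by
        rw [hXdef]; field_simp
      rw [hx4, Real.div_rpow (by positivity) (by positivity)]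
      have : ((r : ℝ) ^ (4:ℕ)) ^ (-(1 : ℝ) / 4) = r⁻¹ := by
        rw [← Real.rpow_natCast r 4, ← Real.rpow_mul hr.le]
        norm_num
        exact Real.rpow_neg_one r
      rw [this]
      field_simp
    have hE4 : (4 * κ * (ε₁ - x) * Real.exp 1) ^ (-(1 : ℝ) / 4) ≤ M := by
      rw [hMdef]
      apply Real.rpow_le_rpow_of_nonpos (by positivity) _ (by norm_num)
      have h1 : ε₁ - t ≤ ε₁ - x := by linarith
      calc 4 * κ * (ε₁ - t) * Real.exp 1 = (4 * κ * Real.exp 1) * (ε₁ - t) := by ring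
        _ ≤ (4 * κ * Real.exp 1) * (ε₁ - x) := mul_le_mul_of_nonneg_left h1 (by positivity)
        _ = 4 * κ * (ε₁ - x) * Real.exp 1 := by ring
    have hEr : Real.exp (-(lam * ((n_up : ℝ) * (ε₁ - x) / ((n_down : ℝ) * r ^ 4)
        + 1 / (ε₁ - x) ^ 3))) ≤ M * r := by
      calc Real.exp (-(lam * ((n_up : ℝ) * (ε₁ - x) / ((n_down : ℝ) * r ^ 4)
            + 1 / (ε₁ - x) ^ 3))) ≤ Real.exp (-X) := hE1
        _ ≤ (4 * X * Real.exp 1) ^ (-(1 : ℝ) / 4) := hE2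
        _ = (4 * κ * (ε₁ - x) * Real.exp 1) ^ (-(1 : ℝ) / 4) * r := hE3
        _ ≤ M * r := by
            apply mul_le_mul_of_nonneg_right hE4 hr.le
    nlinarith [Real.exp_pos (M * x), mul_le_mul_of_nonneg_right hEr (Real.exp_pos (M * x)).le]
  -- main claim
  have key : ∀ s ∈ Icc 0 t, ε₂ ≤ g s := by
    by_contra hcon
    push_neg at hcon
    obtain ⟨s₀, hs₀mem, hs₀⟩ := hcon
    set A : Set ℝ := {s | s ∈ Icc 0 t ∧ g s < ε₂} with hAdef
    have hAne : A.Nonempty := ⟨s₀, hs₀mem, hs₀⟩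
    have hAbdd : BddBelow A := ⟨0, fun y hy => hy.1.1⟩
    set t₀ : ℝ := sInf A with ht₀def
    have ht₀0 : 0 ≤ t₀ := le_csInf hAne fun a ha => ha.1.1
    have ht₀t : t₀ ≤ t := le_trans (csInf_le hAbdd hAne.choose_spec) hAne.choose_spec.1.2
    have ht₀mem : t₀ ∈ Icc 0 t := ⟨ht₀0, ht₀t⟩
    have hbefore : ∀ s ∈ Icc 0 t, s < t₀ → ε₂ ≤ g s := by
      intro s hs hst
      by_contra hgs
      push_neg at hgs
      exact absurd (csInf_le hAbdd ⟨hs, hgs⟩) (not_le.mpr hst)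
    -- g t₀ ≥ ε₂
    have hgt₀ : ε₂ ≤ g t₀ := by
      rcases eq_or_lt_of_le ht₀0 with heq | hlt
      · rw [← heq, hg0]
      · have hne : Filter.NeBot (𝓝[Ico 0 t₀] t₀) := by
          rw [← mem_closure_iff_nhdsWithin_neBot, closure_Ico (ne_of_lt hlt)]
          exact ⟨ht₀0, le_rfl⟩
        have hcw : ContinuousWithinAt g (Ico 0 t₀) t₀ :=
          (hgcont t₀ ht₀mem).mono (fun y hy => ⟨hy.1, le_trans hy.2.le ht₀t⟩)
        refine ge_of_tendsto hcw ?_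
        filter_upwards [self_mem_nhdsWithin] with s hs
        exact hbefore s ⟨hs.1, le_trans hs.2.le ht₀t⟩ hs.2
    -- r₂ t₀ > 0
    have hrt₀ : 0 < r₂ t₀ := by
      have : 0 < r₂ t₀ * Real.exp (M * t₀) := lt_of_lt_of_le hε₂ hgt₀
      nlinarith [Real.exp_pos (M * t₀)]
    -- positivity of r₂ near t₀
    have hev : ∀ᶠ s in 𝓝[Icc 0 ε₁] t₀, 0 < r₂ s :=
      (hcont t₀ (hIccsub ht₀mem)).eventually (eventually_gt_nhds hrt₀)
    rw [Filter.eventually_iff, Metric.mem_nhdsWithin_iff] at hev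
    obtain ⟨δ, hδ, hball⟩ := hev
    -- pick a ∈ A with a < t₀ + δ
    obtain ⟨a, haA, halt⟩ := Real.lt_sInf_add_pos hAne hδ
    have hat₀ : t₀ ≤ a := csInf_le hAbdd haA
    have hane : t₀ ≠ a := by
      intro h; rw [← h] at haA; exact absurd hgt₀ (not_le.mpr haA.2)
    have hat₀' : t₀ < a := lt_of_le_of_ne hat₀ hane
    -- g is monotone on Icc t₀ a
    have hpos : ∀ x ∈ Ioo t₀ a, 0 < r₂ x := by
      intro x hx
      apply hball
      constructor
      · rw [Metric.mem_ball, Real.dist_eq, abs_of_nonneg (by linarith [hx.1] : (0:ℝ) ≤ x - t₀)]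
        linarith [hx.2]
      · exact ⟨le_trans ht₀0 hx.1.le, le_trans hx.2.le (le_trans haA.1.2 ht1.le)⟩
    have hmono : MonotoneOn g (Icc t₀ a) := by
      apply monotoneOn_of_deriv_nonneg (convex_Icc t₀ a)
      · exact hgcont.mono (Icc_subset_Icc ht₀0 haA.1.2)
      · rw [interior_Icc]
        intro x hx
        have := hderiv x (le_trans ht₀0 hx.1.le) (le_trans hx.2.le haA.1.2) (hpos x hx)
        exact this.differentiableAt.differentiableWithinAt
      · rw [interior_Icc]
        intro x hx
        have hd := hderiv x (le_trans ht₀0 hx.1.le) (le_trans hx.2.le haA.1.2) (hpos x hx)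
        rw [hd.deriv]
        exact hderiv_nonneg x (le_trans ht₀0 hx.1.le) (le_trans hx.2.le haA.1.2) (hpos x hx)
    have : g t₀ ≤ g a :=
      hmono ⟨le_rfl, hat₀⟩ ⟨hat₀, le_rfl⟩ hat₀
    linarith [haA.2]
  -- conclude
  have hkey := key t ⟨ht0, le_rfl⟩
  have : ε₂ ≤ r₂ t * Real.exp (M * t) := hkey
  rw [mul_comm t M, Real.exp_neg, ← div_eq_mul_inv, div_le_iff₀ (Real.exp_pos _)]
  exact this
end

section
/- Let ε₁ > 0, ε₂ > 0, λ > 0 be real numbers and let n_up, n_down be positive integers. If r₂ is a solution of the downstream pore-radius ODE (as defined in the context), then r₂(t) ≥ 0 for every t ∈ [0, ε₁]. -/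
open Real Set

/-- A solution of the downstream pore-radius ODE stays nonnegative on `[0, ε₁]`. -/
theorem downstream_pore_radius_nonneg
    (ε₁ ε₂ lam : ℝ) (hε₁ : 0 < ε₁) (hε₂ : 0 < ε₂) (hlam : 0 < lam)
    (n_up n_down : ℕ) (hnup : 0 < n_up) (hndown : 0 < n_down)
    (r₂ : ℝ → ℝ)
    (hcont : ContinuousOn r₂ (Icc 0 ε₁))
    (hinit : r₂ 0 = ε₂)
    (hodePos : ∀ t ∈ Ico 0 ε₁, 0 < r₂ t →
      HasDerivAt r₂
        (-Real.exp (-(lam * ((n_up : ℝ) * (ε₁ - t) / ((n_down : ℝ) * (r₂ t) ^ 4)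
          + 1 / (ε₁ - t) ^ 3)))) t)
    (hodeNonpos : ∀ t ∈ Ico 0 ε₁, r₂ t ≤ 0 → HasDerivAt r₂ 0 t) :
    ∀ t ∈ Icc 0 ε₁, 0 ≤ r₂ t := by
  have key : ∀ t ∈ Ico 0 ε₁, 0 ≤ r₂ t := by
    intro t₁ ht₁
    by_contra hneg
    push_neg at hneg
    have hsub : Icc (0:ℝ) t₁ ⊆ Icc 0 ε₁ := Icc_subset_Icc le_rfl ht₁.2.le
    have hc : ContinuousOn r₂ (Icc 0 t₁) := hcont.mono hsub
    -- the set of zeros of r₂ in [0, t₁]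
    set S : Set ℝ := Icc 0 t₁ ∩ r₂ ⁻¹' {0} with hS
    have hSne : S.Nonempty := by
      have h0 : (0:ℝ) ∈ Icc (r₂ t₁) (r₂ 0) :=
        ⟨hneg.le, by rw [hinit]; exact hε₂.le⟩
      obtain ⟨z, hz, hz0⟩ := intermediate_value_Icc' ht₁.1 hc h0
      exact ⟨z, hz, by simpa using hz0⟩
    have hSclosed : IsClosed S :=
      hc.preimage_isClosed_of_isClosed isClosed_Icc isClosed_singleton
    have hScompact : IsCompact S :=
      isCompact_Icc.of_isClosed_subset hSclosed inter_subset_left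
    set t₀ : ℝ := sSup S with ht₀def
    have ht₀S : t₀ ∈ S := hScompact.sSup_mem hSne
    have ht₀0 : (0:ℝ) ≤ t₀ := ht₀S.1.1
    have ht₀zero : r₂ t₀ = 0 := ht₀S.2
    have hle : ∀ s ∈ S, s ≤ t₀ := fun s hs => le_csSup hScompact.bddAbove hs
    have ht₀lt : t₀ < t₁ := lt_of_le_of_ne ht₀S.1.2
      (fun h => by rw [h] at ht₀zero; exact absurd ht₀zero hneg.ne)
    -- r₂ ≤ 0 on [t₀, t₁]
    have hnonpos : ∀ t ∈ Icc t₀ t₁, r₂ t ≤ 0 := by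
      intro t ht
      rcases eq_or_lt_of_le ht.1 with rfl | hlt
      · exact ht₀zero.le
      by_contra hpos
      push_neg at hpos
      have hc' : ContinuousOn r₂ (Icc t t₁) := hc.mono (Icc_subset_Icc (ht₀0.trans ht.1) le_rfl)
      have h0 : (0:ℝ) ∈ Icc (r₂ t₁) (r₂ t) := ⟨hneg.le, hpos.le⟩
      obtain ⟨z, hz, hz0⟩ := intermediate_value_Icc' ht.2 hc' h0
      have hzS : z ∈ S := ⟨⟨ht₀0.trans (ht.1.trans hz.1), hz.2⟩, by simpa using hz0⟩
      have hzt : z ≤ t₀ := hle z hzS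
      exact absurd (hlt.trans_le (hz.1.trans hzt)) (lt_irrefl t₀)
    -- derivative is 0 on [t₀, t₁)
    have hconst : ∀ x ∈ Icc t₀ t₁, r₂ x = r₂ t₀ := by
      apply constant_of_has_deriv_right_zero
      · exact hc.mono (Icc_subset_Icc ht₀0 le_rfl)
      · intro x hx
        have hxIco : x ∈ Ico 0 ε₁ := ⟨ht₀0.trans hx.1, hx.2.trans ht₁.2⟩
        exact ((hodeNonpos x hxIco (hnonpos x ⟨hx.1, hx.2.le⟩)).hasDerivWithinAt)
    have := hconst t₁ ⟨ht₀lt.le, le_rfl⟩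
    rw [ht₀zero] at this
    exact absurd this hneg.ne
  intro t ht
  rcases lt_or_eq_of_le ht.2 with hlt | rfl
  · exact key t ⟨ht.1, hlt⟩
  · -- t = ε₁: use continuity and the bound on [0, ε₁)
    have hcl : t ∈ closure (Ico 0 t) := by
      rw [closure_Ico hε₁.ne]
      exact ⟨ht.1, le_rfl⟩
    have hne : (nhdsWithin t (Ico 0 t)).NeBot := mem_closure_iff_nhdsWithin_neBot.mp hcl
    have htend : Filter.Tendsto r₂ (nhdsWithin t (Ico 0 t)) (nhds (r₂ t)) :=
      ((hcont t ht).mono Ico_subset_Icc_self).tendsto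
    refine ge_of_tendsto htend ?_
    filter_upwards [self_mem_nhdsWithin] with x hx
    exact key x hx
end

section
/- Let λ > 0, κ > 0 and ε₁ > 0 be real numbers. Then there exists a real constant M such that for every x > 0 and every τ ∈ [0, ε₁), (1/x)·exp(−λ·(κ·(ε₁ − τ)/x⁴ + 1/(ε₁ − τ)³)) ≤ M. That is, the full integrand of the pore-radius integral representation is uniformly bounded on (0, ∞) × [0, ε₁). -/
open Real Set

/-- Uniform boundedness of the full integrand of the pore-radius integral
representation on `(0, ∞) × [0, ε₁)`. -/
theorem integrand_uniformly_bounded (lam κ ε₁ : ℝ)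
    (hlam : 0 < lam) (hκ : 0 < κ) (hε₁ : 0 < ε₁) :
    ∃ M : ℝ, ∀ x : ℝ, 0 < x → ∀ τ ∈ Ico (0 : ℝ) ε₁,
      (1 / x) * Real.exp (-(lam * (κ * (ε₁ - τ) / x ^ 4 + 1 / (ε₁ - τ) ^ 3))) ≤ M := by
  refine ⟨max 1 (ε₁ ^ 2 / (lam ^ 2 * κ)), ?_⟩
  intro x hx τ hτ
  obtain ⟨hτ0, hτε⟩ := hτ
  have hs0 : 0 < ε₁ - τ := by linarith
  have hsε : ε₁ - τ ≤ ε₁ := by linarith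
  set s := ε₁ - τ
  have hA : 0 < lam * (κ * s / x ^ 4) := by positivity
  have hB : 0 < lam * (1 / s ^ 3) := by positivity
  rcases le_or_gt 1 x with h1 | h1
  · have he : Real.exp (-(lam * (κ * s / x ^ 4 + 1 / s ^ 3))) ≤ 1 := by
      rw [Real.exp_le_one_iff]
      nlinarith
    have hx1 : 1 / x ≤ 1 := by
      rw [div_le_one hx]; exact h1
    calc (1 / x) * Real.exp (-(lam * (κ * s / x ^ 4 + 1 / s ^ 3)))
        ≤ 1 * 1 := by
          apply mul_le_mul hx1 he (Real.exp_pos _).le (by norm_num)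
      _ ≤ max 1 (ε₁ ^ 2 / (lam ^ 2 * κ)) := by simp
  · have e1 : lam * (κ * s / x ^ 4) ≤ Real.exp (lam * (κ * s / x ^ 4)) := by
      linarith [Real.add_one_le_exp (lam * (κ * s / x ^ 4))]
    have e2 : lam * (1 / s ^ 3) ≤ Real.exp (lam * (1 / s ^ 3)) := by
      linarith [Real.add_one_le_exp (lam * (1 / s ^ 3))]
    have key : lam * (κ * s / x ^ 4) * (lam * (1 / s ^ 3)) ≤
        Real.exp (lam * (κ * s / x ^ 4 + 1 / s ^ 3)) := by
      rw [mul_add, Real.exp_add]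
      exact mul_le_mul e1 e2 hB.le (Real.exp_pos _).le
    have he : Real.exp (-(lam * (κ * s / x ^ 4 + 1 / s ^ 3))) ≤
        1 / (lam * (κ * s / x ^ 4) * (lam * (1 / s ^ 3))) := by
      rw [Real.exp_neg, ← one_div]
      exact one_div_le_one_div_of_le (by positivity) key
    have hbound : (1 / x) * (1 / (lam * (κ * s / x ^ 4) * (lam * (1 / s ^ 3)))) =
        x ^ 3 * s ^ 2 / (lam ^ 2 * κ) := by
      field_simp
    calc (1 / x) * Real.exp (-(lam * (κ * s / x ^ 4 + 1 / s ^ 3)))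
        ≤ (1 / x) * (1 / (lam * (κ * s / x ^ 4) * (lam * (1 / s ^ 3)))) := by
          apply mul_le_mul_of_nonneg_left he (by positivity)
      _ = x ^ 3 * s ^ 2 / (lam ^ 2 * κ) := hbound
      _ ≤ ε₁ ^ 2 / (lam ^ 2 * κ) := by
          have hx3 : x ^ 3 ≤ 1 := pow_le_one₀ hx.le h1.le
          have hs2 : s ^ 2 ≤ ε₁ ^ 2 := by nlinarith
          apply div_le_div_of_nonneg_right ?_ (by positivity) |>.trans_eq rfl
          nlinarith [pow_pos hx 3, sq_nonneg s]
      _ ≤ max 1 (ε₁ ^ 2 / (lam ^ 2 * κ)) := le_max_right _ _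
end
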